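/- arXiv:2103.01477 — 2 statements merged into one kernel-verified Lean document; each statement's English description precedes it below -/
import Mathlib

section
/- Let μ ∈ 𝕆 be a unit imaginary octonion, i.e. Re μ = 0 and |μ|² = 1. Then for every t ∈ Im 𝕆 the octonion (μt)μ̄ lies in Im 𝕆, and the map S_μ : ℋ → ℋ, S_μ(x,t) = (μx, (μt)μ̄), is a group automorphism of the octonionic Heisenberg group ℋ. -/
open scoped BigOperators
open Matrix

noncomputable section

namespace OC

/-- Octonions, identified with ℝ⁸. -/
abbrev Octo : Type := Fin 8 → ℝ

/-- The seven positively-oriented triples Ω. -/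
def OmegaT : List (Fin 8 × Fin 8 × Fin 8) :=
  [(1,2,3),(2,4,6),(4,3,5),(3,6,7),(6,5,1),(5,7,2),(7,1,4)]

/-- The six permutations of a triple, with their signs. -/
def signedPerms3 (t : Fin 8 × Fin 8 × Fin 8) : List (ℝ × (Fin 8 × Fin 8 × Fin 8)) :=
  [(1,(t.1,t.2.1,t.2.2)), (1,(t.2.1,t.2.2,t.1)), (1,(t.2.2,t.1,t.2.1)),
   (-1,(t.2.1,t.1,t.2.2)), (-1,(t.1,t.2.2,t.2.1)), (-1,(t.2.2,t.2.1,t.1))]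

/-- The totally antisymmetric symbol ε with ε(α,β,γ) = 1 on Ω and vanishing on triples
that are not permutations of a triple of Ω. -/
def eps (a b c : Fin 8) : ℝ :=
  (((OmegaT.map signedPerms3).flatten).map (fun p => if p.2 = (a,b,c) then p.1 else 0)).sum

/-- Coefficient of `e d` in the product `e a * e b`: `e 0` is a two-sided unit and
`e α * e β = -δ_{αβ} e 0 + ∑ γ, ε(α,β,γ) e γ` for imaginary indices. -/
def mulCoef (a b d : Fin 8) : ℝ :=
  if a = 0 then (if d = b then 1 else 0)
  else if b = 0 then (if d = a then 1 else 0)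
  else (if a = b ∧ d = 0 then -1 else 0) + eps a b d

/-- Octonion multiplication on ℝ⁸. -/
def omul (x y : Octo) : Octo := fun d => ∑ a, ∑ b, x a * y b * mulCoef a b d

/-- The standard basis octonions e₀,…,e₇. -/
def e (a : Fin 8) : Octo := fun d => if d = a then 1 else 0

/-- Real part. -/
def reO (x : Octo) : ℝ := x 0

/-- Imaginary part. -/
def imO (x : Octo) : Octo := fun d => if d = 0 then 0 else x d

/-- Octonion conjugation. -/
def conjO (x : Octo) : Octo := fun d => if d = 0 then x 0 else -x d

/-- Squared Euclidean norm |x|². -/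
def normSq (x : Octo) : ℝ := ∑ a, (x a)^2

/-- Inverse of a nonzero octonion, q⁻¹ = q̄ / |q|². -/
def oinv (q : Octo) : Octo := (normSq q)⁻¹ • conjO q

/-- The seven quadruples Λ. -/
def LambdaT : List (Fin 8 × Fin 8 × Fin 8 × Fin 8) :=
  [(5,4,6,7),(7,3,5,1),(1,6,7,2),(2,5,1,4),(4,7,2,3),(3,1,4,6),(6,2,5,3)]

/-- The 24 permutations of a quadruple, with their signs. -/
def signedPerms4 (t : Fin 8 × Fin 8 × Fin 8 × Fin 8) :
    List (ℝ × (Fin 8 × Fin 8 × Fin 8 × Fin 8)) :=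
  let a := t.1; let b := t.2.1; let c := t.2.2.1; let d := t.2.2.2
  [ (1,(a,b,c,d)), (-1,(a,b,d,c)), (-1,(a,c,b,d)), (1,(a,c,d,b)), (1,(a,d,b,c)), (-1,(a,d,c,b)),
    (-1,(b,a,c,d)), (1,(b,a,d,c)), (1,(b,c,a,d)), (-1,(b,c,d,a)), (-1,(b,d,a,c)), (1,(b,d,c,a)),
    (1,(c,a,b,d)), (-1,(c,a,d,b)), (-1,(c,b,a,d)), (1,(c,b,d,a)), (1,(c,d,a,b)), (-1,(c,d,b,a)),
    (-1,(d,a,b,c)), (1,(d,a,c,b)), (1,(d,b,a,c)), (-1,(d,b,c,a)), (-1,(d,c,a,b)), (1,(d,c,b,a)) ]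

/-- The totally antisymmetric symbol ε₄ with value 1 on Λ and vanishing on quadruples
that are not permutations of a quadruple of Λ. -/
def eps4 (a b c d : Fin 8) : ℝ :=
  (((LambdaT.map signedPerms4).flatten).map (fun p => if p.2 = (a,b,c,d) then p.1 else 0)).sum

/-- Matrix of left multiplication by `e a`: `(Imat a) d c` is the coefficient of `e d` in
`e a * e c`. -/
def Imat (a : Fin 8) : Matrix (Fin 8) (Fin 8) ℝ := Matrix.of fun d c => mulCoef a c d

/-- Octonionic Heisenberg group multiplication on 𝕆 × Im 𝕆 (realized inside 𝕆 × 𝕆):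
`(x,t)·(y,s) = (x+y, t+s+2 Im(x ȳ))`. -/
def hmul (p q : Octo × Octo) : Octo × Octo :=
  (p.1 + q.1, p.2 + q.2 + (2:ℝ) • imO (omul p.1 (conjO q.1)))

/-- Group inverse in the octonionic Heisenberg group. -/
def hinv (p : Octo × Octo) : Octo × Octo := (-p.1, -p.2)

/-- Homogeneous norm ‖(x,t)‖ = (|x|⁴+|t|²)^{1/4}. -/
def hnorm (p : Octo × Octo) : ℝ := ((normSq p.1)^2 + normSq p.2) ^ ((1:ℝ)/4)

/-- The inversion R(x,t) = (−((|x|²e₀ − t)⁻¹)x, −t/(|x|⁴+|t|²)). -/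
def Rmap (p : Octo × Octo) : Octo × Octo :=
  (-(omul (oinv (normSq p.1 • e 0 - p.2)) p.1),
   -(((normSq p.1)^2 + normSq p.2)⁻¹ • p.2))

/-- E^β = I_β for β ∈ {1,…,7}, indexed here by `Fin 7` via `β ↦ β+1`. -/
def E7 (β : Fin 7) : Matrix (Fin 8) (Fin 8) ℝ := Imat β.succ

/-- Octonionic Heisenberg group multiplication in ℝ⁸ × ℝ⁷ coordinates. -/
def hmulC (p q : (Fin 8 → ℝ) × (Fin 7 → ℝ)) : (Fin 8 → ℝ) × (Fin 7 → ℝ) :=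
  (p.1 + q.1, fun β => p.2 β + q.2 β + 2 * ∑ a, ∑ b, E7 β a b * p.1 a * q.1 b)

/-- The left-invariant horizontal vector fields
`X_a = ∂/∂x_a + 2 ∑_{β,b} (E^β)_{ba} x_b ∂/∂t_β`. -/
def Xop (a : Fin 8) (f : ((Fin 8 → ℝ) × (Fin 7 → ℝ)) → ℝ)
    (p : (Fin 8 → ℝ) × (Fin 7 → ℝ)) : ℝ :=
  fderiv ℝ f p ((Pi.single a 1 : Fin 8 → ℝ), (0 : Fin 7 → ℝ))
    + 2 * ∑ β : Fin 7, ∑ b : Fin 8,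
        E7 β b a * p.1 b * fderiv ℝ f p ((0 : Fin 8 → ℝ), (Pi.single β 1 : Fin 7 → ℝ))

/-- ρ(x,t) = |x|⁴ + |t|². -/
def rho (p : (Fin 8 → ℝ) × (Fin 7 → ℝ)) : ℝ :=
  (∑ a, (p.1 a)^2)^2 + ∑ β, (p.2 β)^2

/-- The rotation S_μ(x,t) = (μx, (μt)μ̄). -/
def Smu (μ : Octo) (p : Octo × Octo) : Octo × Octo :=
  (omul μ p.1, omul (omul μ p.2) (conjO μ))

set_option maxHeartbeats 2000000
lemma omul0 (x y : Octo) : omul x y 0 = (1) * x 0 * y 0 + (-1) * x 1 * y 1 + (-1) * x 2 * y 2 + (-1) * x 3 * y 3 + (-1) * x 4 * y 4 + (-1) * x 5 * y 5 + (-1) * x 6 * y 6 + (-1) * x 7 * y 7 := by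
  simp (config := {decide := true}) [omul, Fin.sum_univ_eight, mulCoef, eps, OmegaT, signedPerms3]
  try ring

lemma omul1 (x y : Octo) : omul x y 1 = (1) * x 0 * y 1 + (1) * x 1 * y 0 + (1) * x 2 * y 3 + (-1) * x 3 * y 2 + (1) * x 6 * y 5 + (-1) * x 5 * y 6 + (-1) * x 7 * y 4 + (1) * x 4 * y 7 := by
  simp (config := {decide := true}) [omul, Fin.sum_univ_eight, mulCoef, eps, OmegaT, signedPerms3]
  try ring

lemma omul2 (x y : Octo) : omul x y 2 = (1) * x 0 * y 2 + (1) * x 2 * y 0 + (-1) * x 1 * y 3 + (1) * x 3 * y 1 + (1) * x 4 * y 6 + (-1) * x 6 * y 4 + (1) * x 5 * y 7 + (-1) * x 7 * y 5 := by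
  simp (config := {decide := true}) [omul, Fin.sum_univ_eight, mulCoef, eps, OmegaT, signedPerms3]
  try ring

lemma omul3 (x y : Octo) : omul x y 3 = (1) * x 0 * y 3 + (1) * x 3 * y 0 + (1) * x 1 * y 2 + (-1) * x 2 * y 1 + (-1) * x 4 * y 5 + (1) * x 5 * y 4 + (1) * x 6 * y 7 + (-1) * x 7 * y 6 := by
  simp (config := {decide := true}) [omul, Fin.sum_univ_eight, mulCoef, eps, OmegaT, signedPerms3]
  try ring

lemma omul4 (x y : Octo) : omul x y 4 = (1) * x 0 * y 4 + (1) * x 4 * y 0 + (-1) * x 2 * y 6 + (1) * x 6 * y 2 + (1) * x 3 * y 5 + (-1) * x 5 * y 3 + (1) * x 7 * y 1 + (-1) * x 1 * y 7 := by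
  simp (config := {decide := true}) [omul, Fin.sum_univ_eight, mulCoef, eps, OmegaT, signedPerms3]
  try ring

lemma omul5 (x y : Octo) : omul x y 5 = (1) * x 0 * y 5 + (1) * x 5 * y 0 + (1) * x 4 * y 3 + (-1) * x 3 * y 4 + (-1) * x 6 * y 1 + (1) * x 1 * y 6 + (1) * x 7 * y 2 + (-1) * x 2 * y 7 := by
  simp (config := {decide := true}) [omul, Fin.sum_univ_eight, mulCoef, eps, OmegaT, signedPerms3]
  try ring

lemma omul6 (x y : Octo) : omul x y 6 = (1) * x 0 * y 6 + (1) * x 6 * y 0 + (1) * x 2 * y 4 + (-1) * x 4 * y 2 + (-1) * x 3 * y 7 + (1) * x 7 * y 3 + (1) * x 5 * y 1 + (-1) * x 1 * y 5 := by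
  simp (config := {decide := true}) [omul, Fin.sum_univ_eight, mulCoef, eps, OmegaT, signedPerms3]
  try ring

lemma omul7 (x y : Octo) : omul x y 7 = (1) * x 0 * y 7 + (1) * x 7 * y 0 + (1) * x 3 * y 6 + (-1) * x 6 * y 3 + (-1) * x 5 * y 2 + (1) * x 2 * y 5 + (1) * x 1 * y 4 + (-1) * x 4 * y 1 := by
  simp (config := {decide := true}) [omul, Fin.sum_univ_eight, mulCoef, eps, OmegaT, signedPerms3]
  try ring

set_option maxHeartbeats 4000000

lemma octo_ext {x y : Octo} (h0 : x 0 = y 0) (h1 : x 1 = y 1) (h2 : x 2 = y 2) (h3 : x 3 = y 3)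
    (h4 : x 4 = y 4) (h5 : x 5 = y 5) (h6 : x 6 = y 6) (h7 : x 7 = y 7) : x = y := by
  funext d; fin_cases d <;> assumption

lemma conjO_conjO (x : Octo) : conjO (conjO x) = x := by
  refine octo_ext ?_ ?_ ?_ ?_ ?_ ?_ ?_ ?_ <;>
    simp (config := {decide := true}) [conjO]

lemma normSq_conjO (x : Octo) : normSq (conjO x) = normSq x := by
  simp (config := {decide := true}) [normSq, conjO, Fin.sum_univ_eight] ; try ring

lemma omul_add_right (x y z : Octo) : omul x (y + z) = omul x y + omul x z := by
  refine octo_ext ?_ ?_ ?_ ?_ ?_ ?_ ?_ ?_ <;>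
    (simp (config := {decide := true}) [omul0, omul1, omul2, omul3, omul4, omul5, omul6, omul7,
      Pi.add_apply] ; try ring)

lemma omul_smul_right (c : ℝ) (x y : Octo) : omul x (c • y) = c • omul x y := by
  refine octo_ext ?_ ?_ ?_ ?_ ?_ ?_ ?_ ?_ <;>
    (simp (config := {decide := true}) [omul0, omul1, omul2, omul3, omul4, omul5, omul6, omul7,
      Pi.smul_apply, smul_eq_mul] ; try ring)

lemma omul_neg_right (x y : Octo) : omul x (-y) = -omul x y := by
  refine octo_ext ?_ ?_ ?_ ?_ ?_ ?_ ?_ ?_ <;>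
    (simp (config := {decide := true}) [omul0, omul1, omul2, omul3, omul4, omul5, omul6, omul7,
      Pi.neg_apply] ; try ring)

lemma mul_e0 (x : Octo) : omul x (e 0) = x := by
  refine octo_ext ?_ ?_ ?_ ?_ ?_ ?_ ?_ ?_ <;>
    (simp (config := {decide := true}) [omul0, omul1, omul2, omul3, omul4, omul5, omul6, omul7, e]
      ; try ring)

lemma imO_eq (z : Octo) : imO z = z - z 0 • e 0 := by
  refine octo_ext ?_ ?_ ?_ ?_ ?_ ?_ ?_ ?_ <;>
    simp (config := {decide := true}) [imO, e, Pi.sub_apply, Pi.smul_apply, smul_eq_mul]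

lemma conj_mul (x y : Octo) : conjO (omul x y) = omul (conjO y) (conjO x) := by
  refine octo_ext ?_ ?_ ?_ ?_ ?_ ?_ ?_ ?_ <;>
    (simp (config := {decide := true}) [omul0, omul1, omul2, omul3, omul4, omul5, omul6, omul7,
      conjO] ; try ring)

lemma mul_conj_self (x : Octo) : omul x (conjO x) = normSq x • e 0 := by
  refine octo_ext ?_ ?_ ?_ ?_ ?_ ?_ ?_ ?_ <;>
    (simp (config := {decide := true}) [omul0, omul1, omul2, omul3, omul4, omul5, omul6, omul7,
      conjO, e, normSq, Fin.sum_univ_eight, Pi.smul_apply, smul_eq_mul] ; try ring)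

lemma re_mul_conj (x y : Octo) : (omul (omul x y) (conjO x)) 0 = normSq x * y 0 := by
  simp (config := {decide := true}) [omul0, omul1, omul2, omul3, omul4, omul5, omul6, omul7,
    conjO, normSq, Fin.sum_univ_eight] ; try ring

lemma left_alt (x y : Octo) : omul (conjO x) (omul x y) = normSq x • y := by
  refine octo_ext ?_ ?_ ?_ ?_ ?_ ?_ ?_ ?_ <;>
    (simp (config := {decide := true}) [omul0, omul1, omul2, omul3, omul4, omul5, omul6, omul7,
      conjO, normSq, Fin.sum_univ_eight, Pi.smul_apply, smul_eq_mul] ; try ring)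

lemma right_alt (x y : Octo) : omul (omul y x) (conjO x) = normSq x • y := by
  refine octo_ext ?_ ?_ ?_ ?_ ?_ ?_ ?_ ?_ <;>
    (simp (config := {decide := true}) [omul0, omul1, omul2, omul3, omul4, omul5, omul6, omul7,
      conjO, normSq, Fin.sum_univ_eight, Pi.smul_apply, smul_eq_mul] ; try ring)

lemma right_alt' (x y : Octo) : omul (omul y (conjO x)) x = normSq x • y := by
  refine octo_ext ?_ ?_ ?_ ?_ ?_ ?_ ?_ ?_ <;>
    (simp (config := {decide := true}) [omul0, omul1, omul2, omul3, omul4, omul5, omul6, omul7,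
      conjO, normSq, Fin.sum_univ_eight, Pi.smul_apply, smul_eq_mul] ; try ring)

lemma flexible (x y : Octo) : omul x (omul y x) = omul (omul x y) x := by
  refine octo_ext ?_ ?_ ?_ ?_ ?_ ?_ ?_ ?_ <;>
    (simp (config := {decide := true}) [omul0, omul1, omul2, omul3, omul4, omul5, omul6, omul7]
      ; try ring)

lemma moufang (a x y : Octo) :
    omul (omul a x) (omul y a) = omul (omul a (omul x y)) a := by
  refine octo_ext ?_ ?_ ?_ ?_ ?_ ?_ ?_ ?_ <;>
    (simp (config := {decide := true}) [omul0, omul1, omul2, omul3, omul4, omul5, omul6, omul7]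
      ; try ring)

lemma omul_add_left (x y z : Octo) : omul (x + y) z = omul x z + omul y z := by
  refine octo_ext ?_ ?_ ?_ ?_ ?_ ?_ ?_ ?_ <;>
    (simp (config := {decide := true}) [omul0, omul1, omul2, omul3, omul4, omul5, omul6, omul7,
      Pi.add_apply] ; try ring)

lemma omul_smul_left (c : ℝ) (x y : Octo) : omul (c • x) y = c • omul x y := by
  refine octo_ext ?_ ?_ ?_ ?_ ?_ ?_ ?_ ?_ <;>
    (simp (config := {decide := true}) [omul0, omul1, omul2, omul3, omul4, omul5, omul6, omul7,
      Pi.smul_apply, smul_eq_mul] ; try ring)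

lemma omul_sub_right (x y z : Octo) : omul x (y - z) = omul x y - omul x z := by
  rw [sub_eq_add_neg, omul_add_right, omul_neg_right, sub_eq_add_neg]

lemma omul_sub_left (x y z : Octo) : omul (x - y) z = omul x z - omul y z := by
  refine octo_ext ?_ ?_ ?_ ?_ ?_ ?_ ?_ ?_ <;>
    (simp (config := {decide := true}) [omul0, omul1, omul2, omul3, omul4, omul5, omul6, omul7,
      Pi.sub_apply] ; try ring)

/-- For a unit imaginary octonion μ, (μt)μ̄ is imaginary for imaginary t,
and S_μ is a group automorphism of the octonionic Heisenberg group. -/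
theorem Smu_automorphism (μ : Octo) (hre : μ 0 = 0) (hunit : normSq μ = 1) :
    (∀ t : Octo, t 0 = 0 → (omul (omul μ t) (conjO μ)) 0 = 0) ∧
    (∀ p q : Octo × Octo, p.2 0 = 0 → q.2 0 = 0 →
      Smu μ (hmul p q) = hmul (Smu μ p) (Smu μ q)) ∧
    Set.BijOn (Smu μ) {p : Octo × Octo | p.2 0 = 0} {p : Octo × Octo | p.2 0 = 0} := by
  have hconj : conjO μ = -μ := by
    funext d
    by_cases h : d = 0 <;> simp [conjO, h, hre]
  have hre' : ∀ t : Octo, (omul (omul μ t) (conjO μ)) 0 = t 0 := fun t => by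
    rw [re_mul_conj, hunit, one_mul]
  refine ⟨fun t ht => by rw [hre' t]; exact ht, ?_, ?_⟩
  · -- homomorphism
    intro p q hp hq
    have key : ∀ x y : Octo,
        omul (omul μ (imO (omul x (conjO y)))) (conjO μ)
          = imO (omul (omul μ x) (conjO (omul μ y))) := by
      intro x y
      set z : Octo := omul x (conjO y) with hz
      have h1 : omul (omul μ x) (conjO (omul μ y)) = omul (omul μ z) (conjO μ) := by
        rw [conj_mul, hconj, omul_neg_right, omul_neg_right, moufang, ← hz, omul_neg_right]
      rw [h1, imO_eq (omul (omul μ z) (conjO μ)), hre' z,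
        imO_eq z, omul_sub_right, omul_sub_left, omul_smul_right, omul_smul_left,
        mul_e0, mul_conj_self, hunit, one_smul]
    simp only [Smu, hmul, Prod.mk.injEq]
    refine ⟨omul_add_right μ p.1 q.1, ?_⟩
    rw [omul_add_right, omul_add_right, omul_add_left, omul_add_left,
      omul_smul_right, omul_smul_left, key p.1 q.1]
  · -- bijectivity
    have hmap : ∀ p : Octo × Octo, p.2 0 = 0 → (Smu μ p).2 0 = 0 := fun p hp => by
      simp only [Smu]; rw [hre' p.2]; exact hp
    have hmap' : ∀ p : Octo × Octo, p.2 0 = 0 → (Smu (conjO μ) p).2 0 = 0 := fun p hp => by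
      simp only [Smu]; rw [re_mul_conj, normSq_conjO, hunit, one_mul]; exact hp
    have hinv1 : ∀ x : Octo, omul μ (omul (conjO μ) x) = x := by
      intro x
      have h := left_alt (conjO μ) x
      rwa [conjO_conjO, normSq_conjO, hunit, one_smul] at h
    have linv : ∀ p : Octo × Octo, Smu (conjO μ) (Smu μ p) = p := by
      intro p
      simp only [Smu, conjO_conjO]
      refine Prod.ext ?_ ?_
      · show omul (conjO μ) (omul μ p.1) = p.1
        rw [left_alt, hunit, one_smul]
      · show omul (omul (conjO μ) (omul (omul μ p.2) (conjO μ))) μ = p.2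
        rw [flexible (conjO μ) (omul μ p.2), left_alt, hunit, one_smul,
          right_alt', hunit, one_smul]
    have rinv : ∀ p : Octo × Octo, Smu μ (Smu (conjO μ) p) = p := by
      intro p
      simp only [Smu, conjO_conjO]
      refine Prod.ext ?_ ?_
      · exact hinv1 p.1
      · show omul (omul μ (omul (omul (conjO μ) p.2) μ)) (conjO μ) = p.2
        rw [flexible μ (omul (conjO μ) p.2), hinv1 p.2, right_alt, hunit, one_smul]
    refine ⟨fun p hp => hmap p hp, ?_, ?_⟩
    · intro p _ q _ h
      have h2 := congrArg (Smu (conjO μ)) h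
      rwa [linv, linv] at h2
    · intro q hq
      exact ⟨Smu (conjO μ) q, hmap' q hq, rinv q⟩

end OC
end
end

section
/- Let ρ : ℝ⁸ × ℝ⁷ → ℝ be ρ(x,t) = |x|⁴ + |t|², where |x|² = Σ_{a=0}^{7} x_a² and |t|² = Σ_{β=1}^{7} t_β². Then for every a ∈ {0,…,7}, (X_a ρ)(x,t) = 4|x|² x_a + 4 Σ_{β=1}^{7} Σ_{b=0}^{7} (E^β)_{ba} x_b t_β, and consequently Σ_{a=0}^{7} ((X_a ρ)(x,t))² = 16 ρ(x,t) |x|². -/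
open scoped BigOperators
open Matrix

noncomputable section

namespace OC

/-! Reading `t` as the imaginary octonion `t̂ = (0, t)`, the sum `∑ β b, (E^β)_{ba} x_b t_β` is
`-(t̂ x)_a`, because left multiplication by an imaginary unit is skew-symmetric. Hence
`X_a ρ = 4 (|x|² x - t̂ x)_a` and `∑ a (X_a ρ)² = 16 (|x|⁶ - 2 |x|² ⟨x, t̂ x⟩ + |t̂ x|²)`.
Here `⟨x, t̂ x⟩ = Re t̂ |x|² = 0` and `|t̂ x|² = |t|² |x|²` (the eight-square identity), which
leaves `16 |x|² (|x|⁴ + |t|²)`. -/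

theorem signedPerms3_swap (a b c : Fin 8) (t : Fin 8 × Fin 8 × Fin 8) :
    ((signedPerms3 t).map fun p => if p.2 = (a, c, b) then p.1 else 0).sum
      = -((signedPerms3 t).map fun p => if p.2 = (a, b, c) then p.1 else 0).sum := by
  have ite_neg_one (P : Prop) [Decidable P] : (if P then (-1 : ℝ) else 0) = -if P then 1 else 0 := by
    split_ifs <;> simp
  obtain ⟨x, y, z⟩ := t
  simp only [signedPerms3, List.map_cons, List.map_nil, List.sum_cons, List.sum_nil,
    Prod.mk.injEq, and_assoc, and_comm, and_left_comm, ite_neg_one]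
  ring

theorem eps_swap (a b c : Fin 8) : eps a c b = -eps a b c := by
  simp only [eps, List.map_flatten, List.sum_flatten, List.map_map, List.sum_neg]
  exact congrArg List.sum (List.map_congr_left fun t _ => signedPerms3_swap a b c t)

theorem eps_zero (a b : Fin 8) : eps a b 0 = 0 := by
  simp [eps, OmegaT, signedPerms3]

theorem mulCoef_swap {i : Fin 8} (hi : i ≠ 0) (a b : Fin 8) :
    mulCoef i a b = -mulCoef i b a := by
  by_cases ha : a = 0 <;> by_cases hb : b = 0
  · simp [ha, hb, mulCoef, hi, Ne.symm hi]
  · subst ha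
    simp only [mulCoef, hi, hb, eps_zero, eq_comm, if_true, if_false, and_true, add_zero]
    split_ifs <;> simp
  · subst hb
    simp only [mulCoef, hi, ha, eps_zero, eq_comm, if_true, if_false, and_true, add_zero]
    split_ifs <;> simp
  · simp [mulCoef, hi, ha, hb, eps_swap i a b]

theorem sum_E7_eq_neg_omul (x : Octo) (t : Fin 7 → ℝ) (a : Fin 8) :
    ∑ β, ∑ b, E7 β b a * x b * t β = -omul (Fin.cons 0 t) x a := by
  have h : omul (Fin.cons 0 t) x a = ∑ β : Fin 7, ∑ b, t β * x b * mulCoef β.succ b a := by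
    rw [omul, Fin.sum_univ_succ]
    simp
  simp only [h, ← Finset.sum_neg_distrib]
  refine Finset.sum_congr rfl fun β _ => Finset.sum_congr rfl fun b _ => ?_
  rw [E7, Imat, of_apply, mulCoef_swap (Fin.succ_ne_zero β)]
  ring

theorem normSq_omul (u x : Octo) : normSq (omul u x) = normSq u * normSq x := by
  simp +decide [normSq, omul, Fin.sum_univ_eight, mulCoef, eps, OmegaT, signedPerms3]
  ring

theorem sum_mul_omul_self (u x : Octo) : ∑ d, x d * omul u x d = u 0 * normSq x := by
  simp +decide [normSq, omul, Fin.sum_univ_eight, mulCoef, eps, OmegaT, signedPerms3]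
  ring

theorem hasFDerivAt_sum_sq {E ι : Type*} [NormedAddCommGroup E] [NormedSpace ℝ E] [Fintype ι]
    (L : ι → E →L[ℝ] ℝ) (p : E) :
    HasFDerivAt (fun q => ∑ i, L i q ^ 2) (∑ i, (2 * L i p) • L i) p :=
  HasFDerivAt.fun_sum fun i _ => by simpa using (L i).hasFDerivAt.pow 2

open ContinuousLinearMap in
theorem hasFDerivAt_rho (p : (Fin 8 → ℝ) × (Fin 7 → ℝ)) :
    HasFDerivAt rho ((2 * ∑ a, p.1 a ^ 2) • ∑ a, (2 * p.1 a) • (proj a ∘L fst ℝ _ _)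
      + ∑ β, (2 * p.2 β) • (proj β ∘L snd ℝ _ _)) p := by
  have hx := hasFDerivAt_sum_sq (fun a : Fin 8 => proj a ∘L fst ℝ _ (Fin 7 → ℝ)) p
  have ht := hasFDerivAt_sum_sq (fun β : Fin 7 => proj β ∘L snd ℝ (Fin 8 → ℝ) _) p
  refine ((hx.pow 2).fun_add ht).congr_fderiv ?_
  simp

theorem fderiv_rho_apply (p v : (Fin 8 → ℝ) × (Fin 7 → ℝ)) :
    fderiv ℝ rho p v
      = 4 * (∑ c, p.1 c ^ 2) * ∑ a, p.1 a * v.1 a + 2 * ∑ β, p.2 β * v.2 β := by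
  simp only [(hasFDerivAt_rho p).fderiv, _root_.add_apply, _root_.smul_apply,
    _root_.sum_apply, ContinuousLinearMap.comp_apply,
    ContinuousLinearMap.coe_fst', ContinuousLinearMap.coe_snd', ContinuousLinearMap.proj_apply,
    smul_eq_mul, mul_assoc, ← Finset.mul_sum]
  ring

theorem Xop_rho_eq (p : (Fin 8 → ℝ) × (Fin 7 → ℝ)) (a : Fin 8) :
    Xop a rho p = 4 * (∑ c, (p.1 c)^2) * p.1 a
        + 4 * ∑ β : Fin 7, ∑ b : Fin 8, E7 β b a * p.1 b * p.2 β := by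
  simp only [Xop, fderiv_rho_apply, Pi.single_apply, mul_ite, mul_one, mul_zero,
    Finset.sum_ite_eq', Finset.mem_univ, if_true, Pi.zero_apply, Finset.sum_const_zero, add_zero,
    zero_add, Finset.mul_sum]
  ring_nf

theorem sum_mul_sub_sq {ι : Type*} [Fintype ι] (c : ℝ) (x y : ι → ℝ) :
    ∑ i, (c * x i - y i) ^ 2
      = c ^ 2 * ∑ i, x i ^ 2 - 2 * c * ∑ i, x i * y i + ∑ i, y i ^ 2 := by
  simp only [sub_sq, Finset.sum_add_distrib, Finset.sum_sub_distrib, Finset.mul_sum]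
  ring_nf

/-- For ρ(x,t) = |x|⁴ + |t|²,
X_a ρ = 4|x|²x_a + 4 Σ_{β,b} (E^β)_{ba} x_b t_β and Σ_a (X_a ρ)² = 16 ρ |x|². -/
theorem Xop_rho (p : (Fin 8 → ℝ) × (Fin 7 → ℝ)) :
    (∀ a : Fin 8,
      Xop a rho p = 4 * (∑ c, (p.1 c)^2) * p.1 a
        + 4 * ∑ β : Fin 7, ∑ b : Fin 8, E7 β b a * p.1 b * p.2 β) ∧
    (∑ a : Fin 8, (Xop a rho p)^2 = 16 * rho p * ∑ c, (p.1 c)^2) := by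
  refine ⟨Xop_rho_eq p, ?_⟩
  set y := omul (Fin.cons 0 p.2) p.1
  have hX (a : Fin 8) : Xop a rho p = 4 * ((∑ c, p.1 c ^ 2) * p.1 a - y a) := by
    rw [Xop_rho_eq, sum_E7_eq_neg_omul]
    ring
  have horth : ∑ a, p.1 a * y a = 0 := by
    simp [y, sum_mul_omul_self]
  have hnorm : ∑ a, y a ^ 2 = (∑ β, p.2 β ^ 2) * ∑ c, p.1 c ^ 2 := by
    change normSq y = _
    rw [normSq_omul, normSq, Fin.sum_univ_succ]
    simp [normSq]
  simp only [hX, mul_pow, ← Finset.mul_sum, sum_mul_sub_sq, horth, hnorm, rho]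
  ring

end OC
end
end
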